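/- arXiv:1508.00531 — 4 statements merged into one kernel-verified Lean document; each statement's English description precedes it below -/
import Mathlib

section
/- On (n+1)-dimensional Minkowski space with the standard time coordinate t, the null distance induced by τ = t satisfies: for points p, q, if q lies in the causal future or past of p then d̂_t(p,q) = |t(q) − t(p)|, and otherwise d̂_t(p,q) equals the Euclidean distance between the spatial parts of p and q. -/
noncomputable section

open Set

namespace NullDistMink

variable {n : ℕ}

/-- Minkowski space `𝕄^{n+1} = ℝ × ℝⁿ`. -/
abbrev Mink (n : ℕ) : Type := ℝ × EuclideanSpace ℝ (Fin n)

/-- The Minkowski quadratic form `−dt² + Σ(dxⁱ)²` applied to a vector. -/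
def mq (v : Mink n) : ℝ := -v.1 ^ 2 + ‖v.2‖ ^ 2

/-- `v` is a future-pointing causal vector (the zero vector is allowed,
so that trivial curves count as causal). -/
def FutureVec (v : Mink n) : Prop := mq v ≤ 0 ∧ 0 ≤ v.1

/-- `v` is a past-pointing causal vector. -/
def PastVec (v : Mink n) : Prop := FutureVec (-v)

/-- `γ` is a smooth future-directed causal curve on `[a,b]`. -/
def FutureCausalOn (γ : ℝ → Mink n) (a b : ℝ) : Prop :=
  ContDiffOn ℝ (⊤ : ℕ∞) γ (Icc a b) ∧ ∀ s ∈ Icc a b, FutureVec (derivWithin γ (Icc a b) s)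

/-- `γ` is a smooth past-directed causal curve on `[a,b]`. -/
def PastCausalOn (γ : ℝ → Mink n) (a b : ℝ) : Prop :=
  ContDiffOn ℝ (⊤ : ℕ∞) γ (Icc a b) ∧ ∀ s ∈ Icc a b, PastVec (derivWithin γ (Icc a b) s)

/-- The causal relation `p ≤ q`, i.e. `q ∈ J⁺(p)`. -/
def CausalLE (p q : Mink n) : Prop :=
  ∃ γ a b, a ≤ b ∧ FutureCausalOn γ a b ∧ γ a = p ∧ γ b = q

/-- A piecewise causal structure on the curve `γ : [a,b] → 𝕄^{n+1}`:
break points `s 0 = a < s 1 < ⋯ < s k = b` such that on each subinterval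
`γ` is a smooth future or past directed causal curve. -/
structure PWC (γ : ℝ → Mink n) (a b : ℝ) where
  k : ℕ
  s : ℕ → ℝ
  mono : ∀ i < k, s i < s (i + 1)
  first : s 0 = a
  last : s k = b
  causal : ∀ i < k, FutureCausalOn γ (s i) (s (i + 1)) ∨ PastCausalOn γ (s i) (s (i + 1))

/-- The null length of a piecewise causal curve: the sum of the absolute changes
of `τ` along the causal pieces. -/
def nullLength (τ : Mink n → ℝ) {γ : ℝ → Mink n} {a b : ℝ} (P : PWC γ a b) : ℝ :=
  ∑ i ∈ Finset.range P.k, |τ (γ (P.s (i + 1))) - τ (γ (P.s i))|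

/-- The null distance induced by `τ`: the infimum of the null lengths of
piecewise causal curves from `p` to `q`. -/
def nullDist (τ : Mink n → ℝ) (p q : Mink n) : ℝ :=
  sInf {r | ∃ (γ : ℝ → Mink n) (a b : ℝ) (P : PWC γ a b),
    γ a = p ∧ γ b = q ∧ r = nullLength τ P}

/-! ### Auxiliary lemmas -/

lemma futureVec_norm_le {v : Mink n} (h : FutureVec v) : ‖v.2‖ ≤ v.1 := by
  obtain ⟨h1, h2⟩ := h
  have := norm_nonneg v.2
  unfold mq at h1
  nlinarith

lemma inner_key {γ : ℝ → Mink n} {a b : ℝ} (hab : a ≤ b) (h : FutureCausalOn γ a b)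
    (u : EuclideanSpace ℝ (Fin n)) (hu : ‖u‖ ≤ 1) :
    (inner ℝ u ((γ b).2 - (γ a).2) : ℝ) ≤ (γ b).1 - (γ a).1 := by
  rcases eq_or_lt_of_le hab with rfl | hlt
  · simp
  have hdiff : DifferentiableOn ℝ γ (Icc a b) := h.1.differentiableOn (by simp)
  set f : ℝ → ℝ := fun s => (γ s).1 - (inner ℝ u (γ s).2 : ℝ) with hf
  have key : ∀ x ∈ Ioo a b, HasDerivAt f
      ((derivWithin γ (Icc a b) x).1 - (inner ℝ u (derivWithin γ (Icc a b) x).2 : ℝ)) x := by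
    intro x hx
    have hmem : Icc a b ∈ nhds x := Icc_mem_nhds hx.1 hx.2
    have hγx : HasDerivAt γ (derivWithin γ (Icc a b) x) x :=
      ((hdiff x (Ioo_subset_Icc_self hx)).hasDerivWithinAt).hasDerivAt hmem
    have h1 : HasDerivAt (fun s => (γ s).1) (derivWithin γ (Icc a b) x).1 x :=
      ((ContinuousLinearMap.fst ℝ ℝ (EuclideanSpace ℝ (Fin n))).hasFDerivAt.comp_hasDerivAt x hγx)
    have h2 : HasDerivAt (fun s => (inner ℝ u (γ s).2 : ℝ))
        (inner ℝ u (derivWithin γ (Icc a b) x).2 : ℝ) x := by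
      have := ((innerSL ℝ u).comp
        (ContinuousLinearMap.snd ℝ ℝ (EuclideanSpace ℝ (Fin n)))).hasFDerivAt.comp_hasDerivAt x hγx
      exact this
    exact h1.sub h2
  have hmono : MonotoneOn f (Icc a b) := by
    apply monotoneOn_of_deriv_nonneg (convex_Icc a b)
    · apply ContinuousOn.sub
      · exact (h.1.continuousOn.fst)
      · exact ContinuousOn.inner continuousOn_const h.1.continuousOn.snd
    · rw [interior_Icc]
      exact fun x hx => ((key x hx).differentiableAt).differentiableWithinAt
    · rw [interior_Icc]
      intro x hx
      rw [(key x hx).deriv]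
      have hv := h.2 x (Ioo_subset_Icc_self hx)
      have h3 := futureVec_norm_le hv
      have h4 : (inner ℝ u (derivWithin γ (Icc a b) x).2 : ℝ) ≤ ‖(derivWithin γ (Icc a b) x).2‖ := by
        calc (inner ℝ u (derivWithin γ (Icc a b) x).2 : ℝ) ≤ ‖u‖ * ‖(derivWithin γ (Icc a b) x).2‖ :=
              real_inner_le_norm _ _
        _ ≤ 1 * ‖(derivWithin γ (Icc a b) x).2‖ :=
              mul_le_mul_of_nonneg_right hu (norm_nonneg _)
        _ = _ := one_mul _
      linarith
  have := hmono (left_mem_Icc.2 hab) (right_mem_Icc.2 hab) hab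
  simp only [hf, inner_sub_right] at *
  linarith

lemma futureEst {γ : ℝ → Mink n} {a b : ℝ} (hab : a ≤ b) (h : FutureCausalOn γ a b) :
    0 ≤ (γ b).1 - (γ a).1 ∧ ‖(γ b).2 - (γ a).2‖ ≤ (γ b).1 - (γ a).1 := by
  constructor
  · simpa using inner_key hab h 0 (by simp)
  · rcases eq_or_ne ((γ b).2 - (γ a).2) 0 with h0 | h0
    · rw [h0, norm_zero]
      simpa using inner_key hab h 0 (by simp)
    · have := inner_key hab h (‖(γ b).2 - (γ a).2‖⁻¹ • ((γ b).2 - (γ a).2)) (by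
        rw [norm_smul, norm_inv, norm_norm, inv_mul_cancel₀ (norm_ne_zero_iff.2 h0)])
      rwa [real_inner_smul_left, real_inner_self_eq_norm_sq,
        inv_mul_eq_div, sq, mul_div_assoc, div_self (norm_ne_zero_iff.2 h0), mul_one] at this

lemma pastEst {γ : ℝ → Mink n} {a b : ℝ} (hab : a ≤ b) (h : PastCausalOn γ a b) :
    0 ≤ (γ a).1 - (γ b).1 ∧ ‖(γ b).2 - (γ a).2‖ ≤ (γ a).1 - (γ b).1 := by
  rcases eq_or_lt_of_le hab with rfl | hlt
  · simp
  have hf : FutureCausalOn (fun s => -γ s) a b := by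
    refine ⟨h.1.neg, fun s hs => ?_⟩
    show FutureVec (derivWithin (-γ) (Icc a b) s)
    rw [derivWithin.neg]
    exact h.2 s hs
  have := futureEst hab hf
  simp only [Prod.fst_neg, Prod.snd_neg] at this
  constructor
  · linarith [this.1]
  · have : ‖-(γ b).2 - -(γ a).2‖ ≤ -(γ b).1 - -(γ a).1 := this.2
    rw [show -(γ b).2 - -(γ a).2 = -((γ b).2 - (γ a).2) by abel, norm_neg] at this
    linarith

lemma pieceEst {γ : ℝ → Mink n} {a b : ℝ} (hab : a ≤ b)
    (h : FutureCausalOn γ a b ∨ PastCausalOn γ a b) :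
    ‖(γ b).2 - (γ a).2‖ ≤ |(γ b).1 - (γ a).1| := by
  rcases h with h | h
  · have := futureEst hab h
    rw [abs_of_nonneg this.1]; exact this.2
  · have := pastEst hab h
    rw [abs_of_nonpos (by linarith [this.1])]
    simpa using this.2

lemma nullLength_lb {p q : Mink n} {γ : ℝ → Mink n} {a b : ℝ} (P : PWC γ a b)
    (ha : γ a = p) (hb : γ b = q) :
    |q.1 - p.1| ≤ nullLength (fun x => x.1) P ∧
    ‖q.2 - p.2‖ ≤ nullLength (fun x => x.1) P := by
  have hq : γ (P.s P.k) = q := by rw [P.last, hb]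
  have hp : γ (P.s 0) = p := by rw [P.first, ha]
  constructor
  · calc |q.1 - p.1| = |∑ i ∈ Finset.range P.k, ((γ (P.s (i+1))).1 - (γ (P.s i)).1)| := by
          rw [Finset.sum_range_sub (fun i => (γ (P.s i)).1), hq, hp]
    _ ≤ ∑ i ∈ Finset.range P.k, |(γ (P.s (i+1))).1 - (γ (P.s i)).1| :=
          Finset.abs_sum_le_sum_abs _ _
    _ = nullLength (fun x => x.1) P := rfl
  · calc ‖q.2 - p.2‖ = ‖∑ i ∈ Finset.range P.k, ((γ (P.s (i+1))).2 - (γ (P.s i)).2)‖ := by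
          rw [Finset.sum_range_sub (fun i => (γ (P.s i)).2), hq, hp]
    _ ≤ ∑ i ∈ Finset.range P.k, ‖(γ (P.s (i+1))).2 - (γ (P.s i)).2‖ := norm_sum_le _ _
    _ ≤ ∑ i ∈ Finset.range P.k, |(γ (P.s (i+1))).1 - (γ (P.s i)).1| := by
          refine Finset.sum_le_sum fun i hi => ?_
          have hi' := Finset.mem_range.1 hi
          exact pieceEst (le_of_lt (P.mono i hi')) (P.causal i hi')
    _ = nullLength (fun x => x.1) P := rfl

lemma line_derivWithin (p v : Mink n) {a b : ℝ} (hab : a < b) {s : ℝ} (hs : s ∈ Icc a b) :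
    derivWithin (fun t => p + t • v) (Icc a b) s = v := by
  have h : HasDerivAt (fun t : ℝ => p + t • v) v s := by
    simpa using ((hasDerivAt_id s).smul_const v).const_add p
  exact h.hasDerivWithinAt.derivWithin (uniqueDiffOn_Icc hab s hs)

lemma line_contDiffOn (p v : Mink n) (s : Set ℝ) :
    ContDiffOn ℝ (⊤ : ℕ∞) (fun t => p + t • v) s :=
  (contDiff_const.add (contDiff_id.smul contDiff_const)).contDiffOn

lemma causalLE_of_est {p q : Mink n} (h : ‖q.2 - p.2‖ ≤ q.1 - p.1) : CausalLE p q := by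
  refine ⟨fun t => p + t • (q - p), 0, 1, zero_le_one,
    ⟨line_contDiffOn p (q-p) _, ?_⟩, by simp, by simp⟩
  intro s hs
  rw [line_derivWithin p (q - p) one_pos hs]
  refine ⟨?_, by simp only [Prod.fst_sub]; linarith [norm_nonneg (q.2 - p.2)]⟩
  unfold mq
  simp only [Prod.fst_sub, Prod.snd_sub]
  nlinarith [norm_nonneg (q.2 - p.2)]

lemma causalLE_iff {p q : Mink n} : CausalLE p q ↔ ‖q.2 - p.2‖ ≤ q.1 - p.1 := by
  refine ⟨fun ⟨γ, a, b, hab, hf, ha, hb⟩ => ?_, causalLE_of_est⟩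
  have := futureEst hab hf
  rw [ha, hb] at this
  exact this.2

/-- Single straight segment realizing null length `|q.1 - p.1|` when `p, q` are
causally related. -/
lemma mem_line {p q : Mink n} (hc : CausalLE p q ∨ CausalLE q p) :
    ∃ (γ : ℝ → Mink n) (a b : ℝ) (P : PWC γ a b), γ a = p ∧ γ b = q ∧
      |q.1 - p.1| = nullLength (fun x => x.1) P := by
  set γ : ℝ → Mink n := fun t => p + t • (q - p) with hγ
  have hcaus : FutureCausalOn γ 0 1 ∨ PastCausalOn γ 0 1 := by
    rcases hc with hc | hc
    · left
      refine ⟨line_contDiffOn p (q-p) _, fun s hs => ?_⟩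
      rw [line_derivWithin p (q - p) one_pos hs]
      have h := causalLE_iff.1 hc
      refine ⟨?_, by simp only [Prod.fst_sub]; linarith [norm_nonneg (q.2 - p.2)]⟩
      unfold mq
      simp only [Prod.fst_sub, Prod.snd_sub]
      nlinarith [norm_nonneg (q.2 - p.2)]
    · right
      refine ⟨line_contDiffOn p (q-p) _, fun s hs => ?_⟩
      rw [line_derivWithin p (q - p) one_pos hs]
      have h := causalLE_iff.1 hc
      unfold PastVec FutureVec
      rw [neg_sub]
      refine ⟨?_, by simp only [Prod.fst_sub]; linarith [norm_nonneg (p.2 - q.2)]⟩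
      unfold mq
      simp only [Prod.fst_sub, Prod.snd_sub]
      nlinarith [norm_nonneg (p.2 - q.2)]
  refine ⟨γ, 0, 1, ⟨1, fun i => (i : ℝ), ?_, by simp, by simp, ?_⟩, by simp [hγ], by simp [hγ], ?_⟩
  · intro i hi
    interval_cases i
    norm_num
  · intro i hi
    interval_cases i
    simpa using hcaus
  · simp only [nullLength, Finset.sum_range_one]
    norm_num [hγ]

/-- Two-piece null zigzag realizing null length `‖q.2 - p.2‖` when `p, q` are
not causally related. -/
lemma mem_zigzag {p q : Mink n} (hT : |q.1 - p.1| < ‖q.2 - p.2‖) :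
    ∃ (γ : ℝ → Mink n) (a b : ℝ) (P : PWC γ a b), γ a = p ∧ γ b = q ∧
      ‖q.2 - p.2‖ = nullLength (fun x => x.1) P := by
  set T : ℝ := q.1 - p.1 with hTdef
  set D : ℝ := ‖q.2 - p.2‖ with hDdef
  have hD : 0 < D := lt_of_le_of_lt (abs_nonneg _) hT
  have hT1 : -D < T := neg_lt_of_abs_lt hT
  have hT2 : T < D := lt_of_abs_lt hT
  set lam : ℝ := (T + D) / (2 * D) with hlam
  set m : Mink n := (p.1 + (T + D) / 2, p.2 + lam • (q.2 - p.2)) with hm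
  set ζ : ℝ → Mink n :=
    fun s => if s ≤ 1 then p + s • (m - p) else m + (s - 1) • (q - m) with hζ
  have hζ0 : ζ 0 = p := by simp [hζ]
  have hζ1 : ζ 1 = m := by simp [hζ]
  have hζ2 : ζ 2 = q := by norm_num [hζ]
  -- key component facts
  have hmp1 : (m - p).1 = (T + D) / 2 := by simp [hm]
  have hlamnn : 0 ≤ lam := div_nonneg (by linarith) (by linarith)
  have hmp2 : ‖(m - p).2‖ = (T + D) / 2 := by
    have : (m - p).2 = lam • (q.2 - p.2) := by simp [hm]
    rw [this, norm_smul, Real.norm_eq_abs, abs_of_nonneg hlamnn]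
    rw [hlam, ← hDdef]
    field_simp
  have hqm1 : (q - m).1 = -((D - T) / 2) := by simp [hm, hTdef]; ring
  have hqm2 : ‖(q - m).2‖ = (D - T) / 2 := by
    have h1 : (q - m).2 = (1 - lam) • (q.2 - p.2) := by
      simp only [hm, Prod.snd_sub, sub_smul, one_smul]
      abel
    rw [h1, norm_smul, Real.norm_eq_abs, abs_of_nonneg, ← hDdef]
    · rw [hlam]
      field_simp
      ring
    · rw [hlam, sub_nonneg, div_le_one (by positivity)]
      linarith
  have hfut : FutureVec (m - p) := by
    constructor
    · unfold mq; rw [hmp1, hmp2]; ring_nf; exact le_refl _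
    · rw [hmp1]; linarith
  have hpast : PastVec (q - m) := by
    constructor
    · unfold mq
      simp only [Prod.fst_neg, Prod.snd_neg, norm_neg]
      rw [hqm1, hqm2]; ring_nf; exact le_refl _
    · simp only [Prod.fst_neg]
      rw [hqm1]; linarith
  have heq1 : EqOn ζ (fun s => p + s • (m - p)) (Icc (0:ℝ) 1) := fun s hs => if_pos hs.2
  have heq2 : EqOn ζ (fun s => (m - (q - m)) + s • (q - m)) (Icc (1:ℝ) 2) := by
    intro s hs
    have hval : m + (s - 1) • (q - m) = (m - (q - m)) + s • (q - m) := by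
      rw [sub_smul, one_smul]; abel
    by_cases h : s ≤ 1
    · have hs1 : s = 1 := le_antisymm h hs.1
      subst hs1
      show ζ 1 = m - (q - m) + 1 • (q - m)
      rw [hζ1, one_smul]; abel
    · simp only [hζ, if_neg h]
      exact hval
  have hc1 : FutureCausalOn ζ 0 1 := by
    refine ⟨(line_contDiffOn p (m - p) _).congr heq1, fun s hs => ?_⟩
    rw [derivWithin_congr heq1 (heq1 hs), line_derivWithin p (m - p) one_pos hs]
    exact hfut
  have hc2 : PastCausalOn ζ 1 2 := by
    refine ⟨(line_contDiffOn (m - (q - m)) (q - m) _).congr heq2, fun s hs => ?_⟩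
    rw [derivWithin_congr heq2 (heq2 hs),
      line_derivWithin (m - (q - m)) (q - m) one_lt_two hs]
    exact hpast
  refine ⟨ζ, 0, 2, ⟨2, fun i => (i : ℝ), ?_, by simp, by simp, ?_⟩, hζ0, hζ2, ?_⟩
  · intro i hi; interval_cases i <;> norm_num
  · intro i hi
    interval_cases i
    · left; simpa using hc1
    · right; simpa using hc2
  · simp only [nullLength, Finset.sum_range_succ, Finset.sum_range_zero]
    push_cast
    rw [zero_add, hζ0, hζ1, hζ2]
    have e1 : m.1 - p.1 = (T + D) / 2 := by simp [hm]
    have e2 : q.1 - m.1 = -((D - T) / 2) := by simp [hm, hTdef]; ring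
    rw [e1, e2, abs_of_nonneg (by linarith), abs_neg, abs_of_nonneg (by linarith)]
    ring

/-- On Minkowski space with the standard time coordinate `t`,
the null distance of causally related points is `|t(q) − t(p)|`, and of
causally unrelated points is the Euclidean distance of their spatial parts. -/
theorem nullDist_time_minkowski (n : ℕ) (p q : Mink n) :
    (CausalLE p q ∨ CausalLE q p → nullDist (fun x => x.1) p q = |q.1 - p.1|) ∧
    (¬(CausalLE p q ∨ CausalLE q p) → nullDist (fun x => x.1) p q = dist p.2 q.2) := by
  constructor
  · intro hc
    obtain ⟨γ, a, b, P, ha, hb, hlen⟩ := mem_line hc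
    have hmem : |q.1 - p.1| ∈ {r | ∃ (γ : ℝ → Mink n) (a b : ℝ) (P : PWC γ a b),
        γ a = p ∧ γ b = q ∧ r = nullLength (fun x => x.1) P} :=
      ⟨γ, a, b, P, ha, hb, hlen⟩
    have hlb : ∀ r ∈ {r | ∃ (γ : ℝ → Mink n) (a b : ℝ) (P : PWC γ a b),
        γ a = p ∧ γ b = q ∧ r = nullLength (fun x => x.1) P}, |q.1 - p.1| ≤ r := by
      rintro r ⟨γ', a', b', P', ha', hb', rfl⟩
      exact (nullLength_lb P' ha' hb').1
    exact le_antisymm (csInf_le ⟨_, hlb⟩ hmem) (le_csInf ⟨_, hmem⟩ hlb)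
  · intro hnc
    have hT : |q.1 - p.1| < ‖q.2 - p.2‖ := by
      by_contra hcon
      push_neg at hcon
      rcases le_or_gt 0 (q.1 - p.1) with h0 | h0
      · exact hnc (Or.inl (causalLE_of_est (by rwa [abs_of_nonneg h0] at hcon)))
      · refine hnc (Or.inr (causalLE_of_est ?_))
        rw [abs_of_neg h0] at hcon
        rw [norm_sub_rev] at hcon
        linarith
    obtain ⟨γ, a, b, P, ha, hb, hlen⟩ := mem_zigzag hT
    have hmem : ‖q.2 - p.2‖ ∈ {r | ∃ (γ : ℝ → Mink n) (a b : ℝ) (P : PWC γ a b),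
        γ a = p ∧ γ b = q ∧ r = nullLength (fun x => x.1) P} :=
      ⟨γ, a, b, P, ha, hb, hlen⟩
    have hlb : ∀ r ∈ {r | ∃ (γ : ℝ → Mink n) (a b : ℝ) (P : PWC γ a b),
        γ a = p ∧ γ b = q ∧ r = nullLength (fun x => x.1) P}, ‖q.2 - p.2‖ ≤ r := by
      rintro r ⟨γ', a', b', P', ha', hb', rfl⟩
      exact (nullLength_lb P' ha' hb').2
    have : nullDist (fun x => x.1) p q = ‖q.2 - p.2‖ :=
      le_antisymm (csInf_le ⟨_, hlb⟩ hmem) (le_csInf ⟨_, hmem⟩ hlb)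
    rw [this, dist_eq_norm, norm_sub_rev]

end NullDistMink
end
end

section
/- On Minkowski space with τ = t, the null distance sphere of radius r centered at the origin is the coordinate cylinder {(t,x) : max(|t|, ‖x‖) = r}, where ‖x‖ is the Euclidean norm of the spatial part. -/
noncomputable section

open Set

namespace NullDistMink

variable {n : ℕ}

open RealInnerProductSpace

lemma key {u : EuclideanSpace ℝ (Fin n)} (hu : ‖u‖ ≤ 1) {w : Mink n} (hw : FutureVec w) :
    0 ≤ w.1 - ⟪u, w.2⟫ := by
  obtain ⟨hq, h1⟩ := hw
  have hn : ‖w.2‖ ≤ w.1 := by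
    have : ‖w.2‖ ^ 2 ≤ w.1 ^ 2 := by unfold mq at hq; linarith
    nlinarith [norm_nonneg w.2]
  have := real_inner_le_norm u w.2
  nlinarith [norm_nonneg w.2, norm_nonneg u]

/-- L v = e * v.1 - ⟪u, v.2⟫ as a CLM. -/
def Lgen (e : ℝ) (u : EuclideanSpace ℝ (Fin n)) : Mink n →L[ℝ] ℝ :=
  e • ContinuousLinearMap.fst ℝ ℝ _ - (innerSL ℝ u).comp (ContinuousLinearMap.snd ℝ ℝ _)

@[simp] lemma Lgen_apply (e : ℝ) (u : EuclideanSpace ℝ (Fin n)) (v : Mink n) :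
    Lgen e u v = e * v.1 - ⟪u, v.2⟫ := rfl

lemma mono_core {γ : ℝ → Mink n} {c d : ℝ} (hcd : c ≤ d)
    (hγ : ContDiffOn ℝ (⊤ : ℕ∞) γ (Icc c d)) (L : Mink n →L[ℝ] ℝ)
    (hL : ∀ s ∈ Icc c d, 0 ≤ L (derivWithin γ (Icc c d) s)) :
    L (γ c) ≤ L (γ d) := by
  have hmono : MonotoneOn (L ∘ γ) (Icc c d) := by
    apply monotoneOn_of_hasDerivWithinAt_nonneg (convex_Icc c d)
      (f' := fun x => L (derivWithin γ (Icc c d) x))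
    · exact L.continuous.comp_continuousOn hγ.continuousOn
    · intro x hx
      have hd : DifferentiableWithinAt ℝ γ (Icc c d) x :=
        hγ.differentiableOn (by simp) x (interior_subset hx)
      exact L.hasFDerivAt.comp_hasDerivWithinAt x (hd.hasDerivWithinAt.mono interior_subset)
    · intro x hx
      exact hL x (interior_subset hx)
  exact hmono (left_mem_Icc.2 hcd) (right_mem_Icc.2 hcd) hcd

lemma piece_bound {γ : ℝ → Mink n} {c d : ℝ} (hcd : c ≤ d)
    {u : EuclideanSpace ℝ (Fin n)} (hu : ‖u‖ ≤ 1)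
    (h : FutureCausalOn γ c d ∨ PastCausalOn γ c d) :
    ⟪u, (γ d).2 - (γ c).2⟫ ≤ |(γ d).1 - (γ c).1| := by
  rcases h with h | h
  · have h0 : (γ c).1 ≤ (γ d).1 := by
      have := mono_core hcd h.1 (Lgen 1 0) (fun s hs => by
        have hk := key (u := 0) (by rw [norm_zero]; norm_num) (h.2 s hs)
        simpa only [Lgen_apply, inner_zero_left, sub_zero, one_mul] using hk)
      simpa only [Lgen_apply, inner_zero_left, sub_zero, one_mul] using this
    have h1 := mono_core hcd h.1 (Lgen 1 u) (fun s hs => by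
      simpa only [Lgen_apply, one_mul, sub_nonneg] using key hu (h.2 s hs))
    rw [abs_of_nonneg (by linarith)]
    simp only [Lgen_apply, one_mul] at h1
    rw [inner_sub_right]
    linarith
  · have h0 : (γ d).1 ≤ (γ c).1 := by
      have := mono_core hcd h.1 (Lgen (-1) 0) (fun s hs => by
        have := key (u := (0 : EuclideanSpace ℝ (Fin n))) (by simp) (h.2 s hs)
        simpa using this)
      simpa using this
    have h1 := mono_core hcd h.1 (Lgen (-1) u) (fun s hs => by
      have hk := key (u := -u) (by simpa using hu) (h.2 s hs)
      simp only [Lgen_apply]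
      have : ⟪-u, (-(derivWithin γ (Icc c d) s)).2⟫ = ⟪u, (derivWithin γ (Icc c d) s).2⟫ := by
        simp [inner_neg_neg]
      simp only [Prod.fst_neg] at hk
      rw [this] at hk
      linarith)
    rw [abs_of_nonpos (by linarith)]
    simp only [Lgen_apply] at h1
    rw [inner_sub_right]
    linarith


lemma nullLength_nonneg (τ : Mink n → ℝ) {γ : ℝ → Mink n} {a b : ℝ} (P : PWC γ a b) :
    0 ≤ nullLength τ P :=
  Finset.sum_nonneg fun _ _ => abs_nonneg _

lemma lower_bound {γ : ℝ → Mink n} {a b : ℝ} (P : PWC γ a b) {q : Mink n}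
    (h0 : γ a = 0) (h1 : γ b = q) :
    max |q.1| ‖q.2‖ ≤ nullLength (fun y => y.1) P := by
  have habs : |q.1| ≤ nullLength (fun y => y.1) P := by
    have htel : ∑ i ∈ Finset.range P.k, ((γ (P.s (i+1))).1 - (γ (P.s i)).1)
        = (γ (P.s P.k)).1 - (γ (P.s 0)).1 :=
      Finset.sum_range_sub (fun i => (γ (P.s i)).1) P.k
    have : |q.1| = |∑ i ∈ Finset.range P.k, ((γ (P.s (i+1))).1 - (γ (P.s i)).1)| := by
      rw [htel, P.first, P.last, h0, h1]; norm_num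
    rw [this]
    exact le_trans (Finset.abs_sum_le_sum_abs _ _) (le_of_eq rfl)
  have hinner : ∀ u : EuclideanSpace ℝ (Fin n), ‖u‖ ≤ 1 →
      ⟪u, q.2⟫ ≤ nullLength (fun y => y.1) P := by
    intro u hu
    have htel : ∑ i ∈ Finset.range P.k, (⟪u, (γ (P.s (i+1))).2⟫ - ⟪u, (γ (P.s i)).2⟫)
        = ⟪u, (γ (P.s P.k)).2⟫ - ⟪u, (γ (P.s 0)).2⟫ :=
      Finset.sum_range_sub (fun i => ⟪u, (γ (P.s i)).2⟫) P.k
    have hq : ⟪u, q.2⟫ = ∑ i ∈ Finset.range P.k,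
        (⟪u, (γ (P.s (i+1))).2⟫ - ⟪u, (γ (P.s i)).2⟫) := by
      rw [htel, P.first, P.last, h0, h1]
      simp
    rw [hq]
    apply Finset.sum_le_sum
    intro i hi
    have hi' := Finset.mem_range.1 hi
    have hb := piece_bound (le_of_lt (P.mono i hi')) hu (P.causal i hi')
    rw [inner_sub_right] at hb
    exact hb
  rcases eq_or_ne q.2 0 with hz | hz
  · rw [hz]
    simp only [norm_zero]
    rw [max_eq_left (abs_nonneg _)]
    exact habs
  · apply max_le habs
    have hu : ‖(‖q.2‖⁻¹ • q.2 : EuclideanSpace ℝ (Fin n))‖ ≤ 1 := by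
      rw [norm_smul, norm_inv, norm_norm]
      rw [inv_mul_cancel₀ (norm_ne_zero_iff.2 hz)]
    have := hinner _ hu
    rwa [real_inner_smul_left, real_inner_self_eq_norm_sq,
      inv_mul_eq_div, sq, mul_div_assoc, div_self (norm_ne_zero_iff.2 hz), mul_one] at this

/-- A straight segment with future causal direction. -/
lemma seg_future {p v : Mink n} (hv : FutureVec v) {c d : ℝ} (hcd : c < d) :
    FutureCausalOn (fun s => p + (s - c) • v) c d := by
  constructor
  · exact (contDiff_const.add ((contDiff_id.sub contDiff_const).smul contDiff_const)).contDiffOn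
  · intro s hs
    have hder : HasDerivWithinAt (fun s : ℝ => p + (s - c) • v) v (Icc c d) s := by
      have h1 : HasDerivAt (fun s : ℝ => (s - c) • v) ((1 : ℝ) • v) s :=
        ((hasDerivAt_id s).sub_const c).smul_const v
      simpa using (h1.const_add p).hasDerivWithinAt
    rw [hder.derivWithin (uniqueDiffOn_Icc hcd s hs)]
    exact hv

lemma seg_past {p v : Mink n} (hv : PastVec v) {c d : ℝ} (hcd : c < d) :
    PastCausalOn (fun s => p + (s - c) • v) c d := by
  constructor
  · exact (contDiff_const.add ((contDiff_id.sub contDiff_const).smul contDiff_const)).contDiffOn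
  · intro s hs
    have hder : HasDerivWithinAt (fun s : ℝ => p + (s - c) • v) v (Icc c d) s := by
      have h1 : HasDerivAt (fun s : ℝ => (s - c) • v) ((1 : ℝ) • v) s :=
        ((hasDerivAt_id s).sub_const c).smul_const v
      simpa using (h1.const_add p).hasDerivWithinAt
    rw [hder.derivWithin (uniqueDiffOn_Icc hcd s hs)]
    exact hv

lemma FutureCausalOn.congr {γ δ : ℝ → Mink n} {c d : ℝ} (h : FutureCausalOn δ c d)
    (he : EqOn γ δ (Icc c d)) : FutureCausalOn γ c d := by
  refine ⟨h.1.congr he, fun s hs => ?_⟩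
  rw [derivWithin_congr he (he hs)]
  exact h.2 s hs

lemma PastCausalOn.congr {γ δ : ℝ → Mink n} {c d : ℝ} (h : PastCausalOn δ c d)
    (he : EqOn γ δ (Icc c d)) : PastCausalOn γ c d := by
  refine ⟨h.1.congr he, fun s hs => ?_⟩
  rw [derivWithin_congr he (he hs)]
  exact h.2 s hs

lemma mem_case_A {q : Mink n} (hx : ‖q.2‖ ≤ |q.1|) :
    ∃ (γ : ℝ → Mink n) (a b : ℝ) (P : PWC γ a b),
      γ a = 0 ∧ γ b = q ∧ max |q.1| ‖q.2‖ = nullLength (fun y => y.1) P := by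
  set γ : ℝ → Mink n := fun s => (0 : Mink n) + (s - 0) • q with hγ
  have hcausal : FutureCausalOn γ 0 1 ∨ PastCausalOn γ 0 1 := by
    rcases le_or_gt 0 q.1 with hq1 | hq1
    · left
      apply seg_future _ zero_lt_one
      refine ⟨?_, hq1⟩
      unfold mq
      nlinarith [sq_abs q.1, norm_nonneg q.2, abs_nonneg q.1]
    · right
      apply seg_past _ zero_lt_one
      refine ⟨?_, by simp; linarith⟩
      unfold mq
      simp only [Prod.fst_neg, Prod.snd_neg, norm_neg]
      nlinarith [sq_abs q.1, norm_nonneg q.2, abs_nonneg q.1]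
  refine ⟨γ, 0, 1, ⟨1, fun i => (i : ℝ), ?_, by norm_num, by norm_num, ?_⟩, ?_, ?_, ?_⟩
  · intro i hi
    interval_cases i
    norm_num
  · intro i hi
    interval_cases i
    simpa using hcausal
  · simp [hγ]
  · simp [hγ]
  · simp only [nullLength, Finset.sum_range_one]
    rw [max_eq_left hx]
    norm_num [hγ]

lemma mem_case_B {q : Mink n} (hx : |q.1| < ‖q.2‖) :
    ∃ (γ : ℝ → Mink n) (a b : ℝ) (P : PWC γ a b),
      γ a = 0 ∧ γ b = q ∧ max |q.1| ‖q.2‖ = nullLength (fun y => y.1) P := by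
  have hr : (0:ℝ) < ‖q.2‖ := lt_of_le_of_lt (abs_nonneg _) hx
  have hq1 : -‖q.2‖ < q.1 ∧ q.1 < ‖q.2‖ := abs_lt.1 hx
  set c : ℝ := (q.1 + ‖q.2‖) / 2 with hc
  have hc0 : 0 < c := by rw [hc]; linarith [hq1.1]
  have hcr : c < ‖q.2‖ := by rw [hc]; linarith [hq1.2]
  set p₁ : Mink n := (c, (c / ‖q.2‖) • q.2) with hp₁
  have hnorm1 : ‖p₁.2‖ = c := by
    rw [hp₁]
    simp only [norm_smul, Real.norm_eq_abs]
    rw [abs_of_pos (div_pos hc0 hr), div_mul_cancel₀ _ (ne_of_gt hr)]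
  have hfut : FutureVec p₁ := by
    refine ⟨?_, le_of_lt hc0⟩
    unfold mq
    rw [hnorm1]
    simp [hp₁]
  have hpast : PastVec (q - p₁) := by
    have h2 : q.2 - p₁.2 = (1 - c / ‖q.2‖) • q.2 := by
      rw [hp₁]
      simp [sub_smul]
    have hn2 : ‖q.2 - p₁.2‖ = ‖q.2‖ - c := by
      rw [h2]
      simp only [norm_smul, Real.norm_eq_abs]
      rw [abs_of_pos (by rw [sub_pos]; exact (div_lt_one hr).2 hcr)]
      field_simp
    refine ⟨?_, ?_⟩
    · unfold mq
      simp only [Prod.fst_neg, Prod.snd_neg, norm_neg, Prod.fst_sub, Prod.snd_sub]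
      rw [hn2]
      have he : ‖q.2‖ - c = c - q.1 := by rw [hc]; ring
      nlinarith [he]
    · simp only [Prod.fst_neg, Prod.fst_sub]
      show 0 ≤ -(q.1 - c)
      rw [hc]
      linarith [hq1.2]
  set γ : ℝ → Mink n := fun s =>
    if s ≤ 1 then (0 : Mink n) + (s - 0) • p₁ else p₁ + (s - 1) • (q - p₁) with hγ
  have heq1 : EqOn γ (fun s => (0 : Mink n) + (s - 0) • p₁) (Icc (0:ℝ) 1) := by
    intro s hs
    simp only [hγ, if_pos hs.2]
  have heq2 : EqOn γ (fun s => p₁ + (s - 1) • (q - p₁)) (Icc (1:ℝ) 2) := by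
    intro s hs
    rcases lt_or_ge 1 s with h1 | h1
    · simp only [hγ, if_neg (not_le.2 h1)]
    · have : s = 1 := le_antisymm h1 hs.1
      subst this
      simp [hγ]
  have hcaus1 : FutureCausalOn γ 0 1 :=
    (seg_future hfut zero_lt_one).congr heq1
  have hcaus2 : PastCausalOn γ 1 2 :=
    (seg_past hpast one_lt_two).congr heq2
  have hγ0 : γ 0 = 0 := by simp [hγ]
  have hγ1 : γ 1 = p₁ := by simp [hγ]
  have hγ2 : γ 2 = q := by
    simp only [hγ]
    norm_num
  refine ⟨γ, 0, 2, ⟨2, fun i => (i : ℝ), ?_, by norm_num, by norm_num, ?_⟩, hγ0, ?_, ?_⟩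
  · intro i hi
    interval_cases i <;> norm_num
  · intro i hi
    interval_cases i
    · left; simpa using hcaus1
    · right; simpa using hcaus2
  · simpa using hγ2
  · simp only [nullLength, Finset.sum_range_succ, Finset.sum_range_one]
    norm_num [hγ0, hγ1, hγ2]
    rw [max_eq_right (le_of_lt hx)]
    rw [abs_of_pos hc0, abs_of_neg (show q.1 - c < 0 by rw [hc]; linarith [hq1.2]), hc]
    ring

/-- The pointwise formula for the null distance from the origin. -/
lemma nullDist_origin (q : Mink n) :
    nullDist (fun y => y.1) 0 q = max |q.1| ‖q.2‖ := by
  apply IsLeast.csInf_eq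
  constructor
  · rcases le_or_gt ‖q.2‖ |q.1| with h | h
    · exact mem_case_A h
    · exact mem_case_B h
  · rintro r ⟨γ, a, b, P, h0, h1, rfl⟩
    exact lower_bound P h0 h1

/-- On Minkowski space with `τ = t`, the null distance sphere of
radius `r` about the origin is the coordinate cylinder `max (|t|, ‖x‖) = r`. -/
theorem nullDist_sphere_is_cylinder_minkowski (n : ℕ) (r : ℝ) :
    {x : Mink n | nullDist (fun y => y.1) 0 x = r} =
      {x : Mink n | max |x.1| ‖x.2‖ = r} := by
  ext x
  simp [nullDist_origin]

end NullDistMink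
end
end

section
/- On Minkowski space with generalized time function τ = t³, the null distance fails to be definite: for any two points p, q in the slice {t = 0}, d̂_τ(p,q) = 0. -/
noncomputable section

open Set

namespace NullDistMink

variable {n : ℕ}

/-! ### auxiliary -/

def tw (s : ℝ) : ℝ := 1 - |1 - 2 * Int.fract (s / 2)|

lemma tw_fract (j : ℕ) {s : ℝ} (h1 : 2 * (j:ℝ) ≤ s) (h2 : s < 2 * j + 2) :
    Int.fract (s / 2) = s / 2 - j := by
  have hj : ⌊s / 2⌋ = (j : ℤ) := by
    rw [Int.floor_eq_iff]
    constructor <;> push_cast <;> linarith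
  rw [Int.fract, hj]
  push_cast
  ring

lemma tw_even (j : ℕ) {s : ℝ} (hs : s ∈ Icc (2 * j : ℝ) (2 * j + 1)) :
    tw s = s - 2 * j := by
  obtain ⟨h1, h2⟩ := hs
  rw [tw, tw_fract j h1 (by linarith), abs_of_nonneg (by linarith)]
  ring

lemma tw_odd (j : ℕ) {s : ℝ} (hs : s ∈ Icc (2 * j + 1 : ℝ) (2 * j + 2)) :
    tw s = 2 * j + 2 - s := by
  obtain ⟨h1, h2⟩ := hs
  rcases eq_or_lt_of_le h2 with he | he
  · have hq : s / 2 = ((j : ℤ) + 1 : ℤ) := by push_cast; linarith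
    rw [tw, hq, Int.fract_intCast]
    rw [show |1 - 2 * (0:ℝ)| = 1 by norm_num]
    linarith
  · rw [tw, tw_fract j (by linarith) he, abs_of_nonpos (by linarith)]
    ring

lemma tw_nat (i : ℕ) : tw i = if Even i then 0 else 1 := by
  rcases Nat.even_or_odd i with ⟨j, hj⟩ | ⟨j, hj⟩
  · rw [if_pos ⟨j, hj⟩, hj]
    push_cast
    rw [show ((j:ℝ) + j) = 2 * (j:ℝ) by ring,
      tw_even j ⟨le_refl _, by linarith⟩]
    ring
  · rw [if_neg (by simp [hj, parity_simps]), hj]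
    push_cast
    rw [tw_even j ⟨by linarith, by linarith⟩]
    ring

lemma affine_piece (n : ℕ) (a b : ℝ) (hab : a < b) (v c : Mink n) (γ : ℝ → Mink n)
    (hγ : ∀ s ∈ Icc a b, γ s = (c.1 + s * v.1, c.2 + s • v.2)) :
    ContDiffOn ℝ (⊤ : ℕ∞) γ (Icc a b) ∧ ∀ s ∈ Icc a b, derivWithin γ (Icc a b) s = v := by
  set A : ℝ → Mink n := fun s => (c.1 + s * v.1, c.2 + s • v.2) with hA
  have hcd : ContDiff ℝ (⊤ : ℕ∞) A :=
    ContDiff.prodMk (contDiff_const.add (contDiff_id.mul contDiff_const))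
      (contDiff_const.add (contDiff_id.smul contDiff_const))
  have hder : ∀ s : ℝ, HasDerivAt A v s := by
    intro s
    have h1 : HasDerivAt (fun s : ℝ => c.1 + s * v.1) v.1 s := by
      simpa using ((hasDerivAt_id s).mul_const v.1).const_add c.1
    have h2 : HasDerivAt (fun s : ℝ => c.2 + s • v.2) v.2 s := by
      simpa using ((hasDerivAt_id s).smul_const v.2).const_add c.2
    exact h1.prodMk h2
  constructor
  · exact hcd.contDiffOn.congr hγ
  · intro s hs
    rw [derivWithin_congr hγ (hγ s hs)]
    exact ((hder s).hasDerivWithinAt).derivWithin (uniqueDiffOn_Icc hab s hs)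

lemma zigzag (n : ℕ) (p q : Mink n) (hp : p.1 = 0) (hq : q.1 = 0)
    (hne : p.2 ≠ q.2) (m : ℕ) (hm : 0 < m) :
    ∃ (γ : ℝ → Mink n) (P : PWC γ 0 (2 * m)),
      γ 0 = p ∧ γ (2 * m) = q ∧
      nullLength (fun x => x.1 ^ 3) P = 2 * m * (‖q.2 - p.2‖ / (2 * m)) ^ 3 := by
  set D := ‖q.2 - p.2‖ with hD
  have hD0 : 0 < D := norm_pos_iff.mpr (sub_ne_zero.mpr (Ne.symm hne))
  have hm0 : (0:ℝ) < 2 * m := by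
    have : (0:ℝ) < (m:ℝ) := by exact_mod_cast hm
    linarith
  set ε := D / (2 * (m:ℝ)) with hε
  have hε0 : 0 < ε := div_pos hD0 hm0
  set w : EuclideanSpace ℝ (Fin n) := (ε / D) • (q.2 - p.2) with hw
  have hwn : ‖w‖ = ε := by
    rw [hw, norm_smul, Real.norm_eq_abs, abs_of_pos (div_pos hε0 hD0), ← hD,
      div_mul_cancel₀ _ hD0.ne']
  set γ : ℝ → Mink n := fun s => (ε * tw s, p.2 + s • w) with hγdef
  have piece : ∀ (a v1 c1 : ℝ), (∀ s ∈ Icc a (a+1), ε * tw s = c1 + s * v1) →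
      ContDiffOn ℝ (⊤ : ℕ∞) γ (Icc a (a+1)) ∧
      ∀ s ∈ Icc a (a+1), derivWithin γ (Icc a (a+1)) s = ((v1, w) : Mink n) := by
    intro a v1 c1 hfs
    exact affine_piece n a (a+1) (lt_add_one a) (v1, w) (c1, p.2) γ
      (fun s hs => by rw [hγdef]; exact Prod.ext_iff.mpr ⟨hfs s hs, rfl⟩)
  have hFV : FutureVec ((ε, w) : Mink n) := by
    constructor
    · simp [mq, hwn]
    · exact hε0.le
  have hPV : PastVec ((-ε, w) : Mink n) := by
    constructor
    · simp [mq, hwn]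
    · simpa using hε0.le
  have hmono : ∀ i < 2*m, ((i:ℕ):ℝ) < ((i+1:ℕ):ℝ) := by
    intro i _
    push_cast
    linarith
  have hfirst : ((0:ℕ):ℝ) = (0:ℝ) := Nat.cast_zero
  have hlast : ((2*m:ℕ):ℝ) = 2*(m:ℝ) := by push_cast; ring
  have hcausal : ∀ i < 2*m, FutureCausalOn γ ((i:ℕ):ℝ) ((i+1:ℕ):ℝ) ∨
      PastCausalOn γ ((i:ℕ):ℝ) ((i+1:ℕ):ℝ) := by
    intro i hi
    have hcast : ((i+1:ℕ):ℝ) = (i:ℝ) + 1 := by push_cast; ring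
    rw [hcast]
    rcases Nat.even_or_odd i with ⟨j, hj⟩ | ⟨j, hj⟩
    · left
      have hia : (i:ℝ) = 2 * j := by rw [hj]; push_cast; ring
      obtain ⟨hc, hd⟩ := piece (i:ℝ) ε (-(ε * i)) (by
        intro s hs
        rw [hia] at hs ⊢
        rw [tw_even j hs]
        ring)
      exact ⟨hc, fun s hs => by rw [hd s hs]; exact hFV⟩
    · right
      have hia : (i:ℝ) = 2 * j + 1 := by rw [hj]; push_cast; ring
      obtain ⟨hc, hd⟩ := piece (i:ℝ) (-ε) (ε * (i+1)) (by
        intro s hs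
        rw [hia] at hs
        rw [show (2*(j:ℝ)+1)+1 = 2*j+2 by ring] at hs
        rw [tw_odd j hs, hia]
        ring)
      exact ⟨hc, fun s hs => by rw [hd s hs]; exact hPV⟩
  have hstart : γ 0 = p := by
    have h0 : tw (0:ℝ) = 0 := by
      have := tw_nat 0
      rw [if_pos Even.zero] at this
      simpa using this
    show (ε * tw 0, p.2 + (0:ℝ) • w) = p
    rw [h0]
    exact Prod.ext_iff.mpr ⟨by simpa using hp.symm, by simp⟩
  have hend : γ (2*(m:ℝ)) = q := by
    have h2m : tw (2 * (m:ℝ)) = 0 := by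
      have := tw_nat (2*m)
      rw [if_pos (even_two_mul m)] at this
      rw [show 2*(m:ℝ) = ((2*m:ℕ):ℝ) by push_cast; ring, this]
    show (ε * tw (2*(m:ℝ)), p.2 + (2*(m:ℝ)) • w) = q
    rw [h2m]
    have hsmul : (2 * (m:ℝ)) • w = q.2 - p.2 := by
      rw [hw, smul_smul, hε]
      rw [show 2 * (m:ℝ) * (D / (2 * m) / D) = 1 by field_simp]
      rw [one_smul]
    exact Prod.ext_iff.mpr ⟨by simpa using hq.symm, by rw [hsmul]; simp⟩
  refine ⟨γ, ⟨2*m, fun i => (i:ℝ), hmono, hfirst, by simpa using hlast, hcausal⟩,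
    hstart, hend, ?_⟩
  show ∑ i ∈ Finset.range (2*m),
      |(ε * tw ((i+1:ℕ):ℝ)) ^ 3 - (ε * tw ((i:ℕ):ℝ)) ^ 3| = _
  have term : ∀ i ∈ Finset.range (2*m),
      |(ε * tw ((i+1:ℕ):ℝ)) ^ 3 - (ε * tw ((i:ℕ):ℝ)) ^ 3| = ε ^ 3 := by
    intro i _
    rw [tw_nat i, tw_nat (i+1)]
    rcases Nat.even_or_odd i with he | ho
    · rw [if_pos he, if_neg (Nat.not_even_iff_odd.mpr he.add_one)]
      rw [show |(ε*1)^3 - (ε*0)^3| = |ε^3| by ring_nf]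
      exact abs_of_pos (by positivity)
    · rw [if_neg (Nat.not_even_iff_odd.mpr ho), if_pos ho.add_one]
      rw [show |(ε*0)^3 - (ε*1)^3| = |-(ε^3)| by ring_nf]
      rw [abs_neg]
      exact abs_of_pos (by positivity)
  rw [Finset.sum_congr rfl term, Finset.sum_const, Finset.card_range,
    nsmul_eq_mul]
  push_cast
  rw [hε]


/-- On Minkowski space with the generalized time function `τ = t³`,
the null distance fails to be definite: any two points of the slice `{t = 0}` are
at null distance `0`. -/
theorem nullDist_tcubed_indefinite (n : ℕ) (p q : Mink n)
    (hp : p.1 = 0) (hq : q.1 = 0) :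
    nullDist (fun x => x.1 ^ 3) p q = 0 := by
  rw [nullDist]
  set S := {r : ℝ | ∃ (γ : ℝ → Mink n) (a b : ℝ) (P : PWC γ a b),
    γ a = p ∧ γ b = q ∧ r = nullLength (fun x => x.1 ^ 3) P} with hS
  have hnn : ∀ r ∈ S, 0 ≤ r := by
    rintro r ⟨γ, a, b, P, -, -, rfl⟩
    exact Finset.sum_nonneg fun _ _ => abs_nonneg _
  have hbdd : BddBelow S := ⟨0, hnn⟩
  refine le_antisymm ?_ (Real.sInf_nonneg hnn)
  refine le_of_forall_pos_le_add ?_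
  intro ε' hε'
  by_cases hpq : p.2 = q.2
  · have hpq' : p = q := Prod.ext_iff.mpr ⟨hp.trans hq.symm, hpq⟩
    have h0 : (0:ℝ) ∈ S := by
      refine ⟨fun _ => p, 0, 0,
        ⟨0, fun _ => 0, fun i hi => absurd hi (Nat.not_lt_zero i), rfl, rfl,
          fun i hi => absurd hi (Nat.not_lt_zero i)⟩, rfl, hpq' ▸ rfl, ?_⟩
      simp [nullLength]
    have := csInf_le hbdd h0
    linarith
  · set D := ‖q.2 - p.2‖ with hD
    have hD0 : 0 < D := norm_pos_iff.mpr (sub_ne_zero.mpr (Ne.symm hpq))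
    obtain ⟨m0, hm0⟩ := exists_nat_gt (D ^ 3 / (4 * ε'))
    set m := m0 + 1 with hm
    have hmpos : 0 < m := Nat.succ_pos m0
    obtain ⟨γ, P, h1, h2, h3⟩ := zigzag n p q hp hq hpq m hmpos
    have hmem : nullLength (fun x : Mink n => x.1 ^ 3) P ∈ S :=
      ⟨γ, 0, 2 * m, P, h1, h2, rfl⟩
    have hle := csInf_le hbdd hmem
    rw [h3, ← hD] at hle
    have hm1 : (1:ℝ) ≤ (m:ℝ) := by exact_mod_cast hmpos
    have hmR : D ^ 3 / (4 * ε') < (m:ℝ) := by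
      have : (m0:ℝ) ≤ (m:ℝ) := by exact_mod_cast Nat.le_succ m0
      linarith
    have hD3 : D ^ 3 < (m:ℝ) * (4 * ε') := by
      rwa [div_lt_iff₀ (by positivity)] at hmR
    have key : 2 * (m:ℝ) * (D / (2 * m)) ^ 3 ≤ ε' := by
      have heq : 2 * (m:ℝ) * (D / (2 * m)) ^ 3 = D ^ 3 / (4 * (m:ℝ) ^ 2) := by
        field_simp
        ring
      rw [heq, div_le_iff₀ (by positivity)]
      nlinarith [hε'.le, hm1, sq_nonneg ((m:ℝ) - 1)]
    linarith

end NullDistMink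
end
end

section
/- On Minkowski space with τ = t³, for any points p = (t_p, p_S) and q = (t_q, q_S) with t_p < 0 < t_q, one has d̂_τ(p,q) = τ(q) − τ(p); hence d̂_τ fails to encode the causal structure. -/
noncomputable section

open Set

namespace NullDistMink

variable {n : ℕ}

/-! ### Auxiliary lemmas -/

lemma affine_deriv {γ : ℝ → Mink n} {a b c d : ℝ}
    {w0 u : EuclideanSpace ℝ (Fin n)} (hab : a < b)
    (heq : EqOn γ (fun x => (c + x * d, w0 + x • u)) (Icc a b)) :
    ContDiffOn ℝ (⊤ : ℕ∞) γ (Icc a b) ∧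
      ∀ x ∈ Icc a b, derivWithin γ (Icc a b) x = (d, u) := by
  have hf : ∀ x : ℝ, HasDerivAt (fun x : ℝ => (c + x * d, w0 + x • u)) (d, u) x := by
    intro x
    have h1 : HasDerivAt (fun x : ℝ => c + x * d) d x := by
      simpa using ((hasDerivAt_id x).mul_const d).const_add c
    have h2 : HasDerivAt (fun x : ℝ => w0 + x • u) u x := by
      simpa using ((hasDerivAt_id x).smul_const u).const_add w0
    exact h1.prodMk h2
  have hsm : ContDiff ℝ (⊤ : ℕ∞) (fun x : ℝ => (c + x * d, w0 + x • u)) :=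
    (contDiff_const.add (contDiff_id.mul contDiff_const)).prodMk
      (contDiff_const.add (contDiff_id.smul contDiff_const))
  refine ⟨hsm.contDiffOn.congr heq, fun x hx => ?_⟩
  rw [derivWithin_congr heq (heq hx)]
  exact (hf x).hasDerivWithinAt.derivWithin ((uniqueDiffOn_Icc hab) x hx)

lemma futureCausalOn_of_affine {γ : ℝ → Mink n} {a b c d : ℝ}
    {w0 u : EuclideanSpace ℝ (Fin n)} (hab : a < b)
    (heq : EqOn γ (fun x => (c + x * d, w0 + x • u)) (Icc a b))
    (hd : 0 ≤ d) (hu : ‖u‖ ^ 2 ≤ d ^ 2) : FutureCausalOn γ a b := by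
  obtain ⟨h1, h2⟩ := affine_deriv hab heq
  refine ⟨h1, fun x hx => ?_⟩
  rw [h2 x hx]
  exact ⟨by simp only [mq]; linarith, hd⟩

lemma pastCausalOn_of_affine {γ : ℝ → Mink n} {a b c d : ℝ}
    {w0 u : EuclideanSpace ℝ (Fin n)} (hab : a < b)
    (heq : EqOn γ (fun x => (c + x * d, w0 + x • u)) (Icc a b))
    (hd : d ≤ 0) (hu : ‖u‖ ^ 2 ≤ d ^ 2) : PastCausalOn γ a b := by
  obtain ⟨h1, h2⟩ := affine_deriv hab heq
  refine ⟨h1, fun x hx => ?_⟩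
  rw [h2 x hx]
  refine ⟨?_, by simpa using hd⟩
  simp only [mq]
  simp only [Prod.fst_neg, Prod.snd_neg, norm_neg]
  · linarith [neg_pow d 2]

lemma nullLength_lower (τ : Mink n → ℝ) {γ : ℝ → Mink n} {a b : ℝ} (P : PWC γ a b) :
    τ (γ b) - τ (γ a) ≤ nullLength τ P := by
  have h := Finset.sum_range_sub (fun i => τ (γ (P.s i))) P.k
  calc τ (γ b) - τ (γ a)
      = ∑ i ∈ Finset.range P.k, (τ (γ (P.s (i+1))) - τ (γ (P.s i))) := by
        rw [h, P.first, P.last]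
    _ ≤ nullLength τ P := Finset.sum_le_sum fun i _ => le_abs_self _


/-! ### The zigzag curve -/

/-- The zigzag curve from `p` to `q` with `2N` teeth-halves in the middle. -/
def zz (p q : Mink n) (N : ℕ) : ℝ → Mink n := fun x =>
  if x ≤ 0 then (-x * p.1, p.2)
  else if x ≤ 1 then
    ((‖q.2 - p.2‖ / (2*N)) * (1 - |2*(N:ℝ)*x - 2*(⌊(N:ℝ)*x⌋:ℝ) - 1|),
      p.2 + x • (q.2 - p.2))
  else ((x-1)*q.1, q.2)

/-- Break points for the zigzag curve. -/
def zs (N : ℕ) : ℕ → ℝ := fun i =>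
  if i = 0 then -1 else if i ≤ 2*N+1 then ((i:ℝ)-1)/(2*(N:ℝ)) else 2

lemma zs_zero (N : ℕ) : zs N 0 = -1 := rfl

lemma zs_mid (N : ℕ) {i : ℕ} (h1 : 1 ≤ i) (h2 : i ≤ 2*N+1) :
    zs N i = ((i:ℝ)-1)/(2*(N:ℝ)) := by
  have h0 : i ≠ 0 := by omega
  simp [zs, h0, h2]

lemma zs_last (N : ℕ) : zs N (2*N+2) = 2 := by
  simp only [zs]
  rw [if_neg (by omega), if_neg (by omega)]

lemma zz_left (p q : Mink n) (N : ℕ) :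
    EqOn (zz p q N)
      (fun x => (0 + x * (-p.1), p.2 + x • (0 : EuclideanSpace ℝ (Fin n))))
      (Icc (-1 : ℝ) 0) := by
  intro x hx
  simp only [zz, if_pos hx.2]
  refine Prod.ext ?_ ?_ <;> simp <;> ring

lemma zz_right (p q : Mink n) (N : ℕ) (hN : 1 ≤ N) :
    EqOn (zz p q N)
      (fun x => (-q.1 + x * q.1, q.2 + x • (0 : EuclideanSpace ℝ (Fin n))))
      (Icc (1 : ℝ) 2) := by
  intro x hx
  have hx1 : ¬ x ≤ 0 := by linarith [hx.1]
  by_cases h1 : x ≤ 1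
  · have hxe : x = 1 := le_antisymm h1 hx.1
    subst hxe
    have hfl : ⌊(N:ℝ) * 1⌋ = (N : ℤ) := by
      rw [mul_one]; exact Int.floor_natCast N
    simp only [zz, if_neg hx1, if_pos le_rfl, hfl]
    refine Prod.ext ?_ ?_
    · have : |2*(N:ℝ)*1 - 2*((N:ℤ):ℝ) - 1| = 1 := by
        push_cast; rw [show 2*(N:ℝ)*1 - 2*(N:ℝ) - 1 = -1 by ring]; simp
      simp [this]
    · simp
  · simp only [zz, if_neg hx1, if_neg h1]
    refine Prod.ext ?_ ?_ <;> simp <;> ring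


lemma zz_start (p q : Mink n) (N : ℕ) : zz p q N (-1) = p := by
  simp only [zz, if_pos (by norm_num : (-1:ℝ) ≤ 0)]
  simp

lemma zz_end (p q : Mink n) (N : ℕ) : zz p q N 2 = q := by
  simp only [zz, if_neg (by norm_num : ¬(2:ℝ) ≤ 0), if_neg (by norm_num : ¬(2:ℝ) ≤ 1)]
  norm_num

lemma zz_even (p q : Mink n) {N : ℕ} (hN : 1 ≤ N) {j : ℕ} (hj : j < N) :
    EqOn (zz p q N)
      (fun x => (-(2*(j:ℝ)) * (‖q.2 - p.2‖ / (2*(N:ℝ))) + x * ‖q.2 - p.2‖,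
        p.2 + x • (q.2 - p.2)))
      (Icc ((2*(j:ℝ))/(2*(N:ℝ))) ((2*(j:ℝ)+1)/(2*(N:ℝ)))) := by
  have hNr : (1:ℝ) ≤ (N:ℝ) := by exact_mod_cast hN
  have h2N : (0:ℝ) < 2*(N:ℝ) := by linarith
  have hjN : (j:ℝ) ≤ (N:ℝ) - 1 := by
    have : (j:ℝ) + 1 ≤ (N:ℝ) := by exact_mod_cast hj
    linarith
  intro x hx
  have hxl : (2*(j:ℝ)) ≤ 2*(N:ℝ)*x := by
    have := (div_le_iff₀ h2N).mp hx.1; linarith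
  have hxr : 2*(N:ℝ)*x ≤ 2*(j:ℝ)+1 := by
    have := (le_div_iff₀ h2N).mp hx.2; linarith
  have hx1 : x ≤ 1 := by nlinarith
  by_cases hx0 : x ≤ 0
  · have hxe : x = 0 := le_antisymm hx0 (by nlinarith)
    have hj0 : (j:ℝ) = 0 := by nlinarith
    subst hxe
    simp only [zz, if_pos le_rfl, hj0]
    refine Prod.ext ?_ ?_ <;> simp
  · have hfl : ⌊(N:ℝ)*x⌋ = (j:ℤ) := by
      rw [Int.floor_eq_iff]
      constructor
      · push_cast; linarith
      · push_cast; linarith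
    simp only [zz, if_neg hx0, if_pos hx1, hfl]
    refine Prod.ext ?_ ?_
    · show ‖q.2 - p.2‖/(2*(N:ℝ)) * (1 - |2*(N:ℝ)*x - 2*((j:ℤ):ℝ) - 1|) = _
      rw [show ((j:ℤ):ℝ) = (j:ℝ) by push_cast; ring,
        abs_of_nonpos (by linarith : 2*(N:ℝ)*x - 2*(j:ℝ) - 1 ≤ 0)]
      show _ = -(2*(j:ℝ)) * (‖q.2 - p.2‖ / (2*(N:ℝ))) + x * ‖q.2 - p.2‖
      field_simp
      ring
    · rfl

lemma zz_odd (p q : Mink n) {N : ℕ} (hN : 1 ≤ N) {j : ℕ} (hj : j < N) :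
    EqOn (zz p q N)
      (fun x => ((2*(j:ℝ)+2) * (‖q.2 - p.2‖ / (2*(N:ℝ))) + x * (-‖q.2 - p.2‖),
        p.2 + x • (q.2 - p.2)))
      (Icc ((2*(j:ℝ)+1)/(2*(N:ℝ))) ((2*(j:ℝ)+2)/(2*(N:ℝ)))) := by
  have hNr : (1:ℝ) ≤ (N:ℝ) := by exact_mod_cast hN
  have h2N : (0:ℝ) < 2*(N:ℝ) := by linarith
  have hjN : (j:ℝ) ≤ (N:ℝ) - 1 := by
    have : (j:ℝ) + 1 ≤ (N:ℝ) := by exact_mod_cast hj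
    linarith
  intro x hx
  have hxl : (2*(j:ℝ)+1) ≤ 2*(N:ℝ)*x := by
    have := (div_le_iff₀ h2N).mp hx.1; linarith
  have hxr : 2*(N:ℝ)*x ≤ 2*(j:ℝ)+2 := by
    have := (le_div_iff₀ h2N).mp hx.2; linarith
  have hx1 : x ≤ 1 := by nlinarith
  have hx0 : ¬ x ≤ 0 := by nlinarith
  rcases eq_or_lt_of_le hxr with hre | hrl
  · -- right endpoint : 2Nx = 2j+2
    have hfl : ⌊(N:ℝ)*x⌋ = ((j:ℤ)+1) := by
      rw [Int.floor_eq_iff]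
      constructor
      · push_cast; linarith
      · push_cast; linarith
    simp only [zz, if_neg hx0, if_pos hx1, hfl]
    refine Prod.ext ?_ ?_
    · show ‖q.2 - p.2‖/(2*(N:ℝ)) * (1 - |2*(N:ℝ)*x - 2*(((j:ℤ)+1:ℤ):ℝ) - 1|) = _
      rw [show ((((j:ℤ)+1):ℤ):ℝ) = (j:ℝ)+1 by push_cast; ring]
      rw [show 2*(N:ℝ)*x - 2*((j:ℝ)+1) - 1 = -1 by linarith, abs_neg, abs_one]
      show _ = (2*(j:ℝ)+2) * (‖q.2 - p.2‖ / (2*(N:ℝ))) + x * (-‖q.2 - p.2‖)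
      have hx' : x = (2*(j:ℝ)+2)/(2*(N:ℝ)) := by
        field_simp; linarith
      rw [hx']
      field_simp
      ring
    · rfl
  · have hfl : ⌊(N:ℝ)*x⌋ = (j:ℤ) := by
      rw [Int.floor_eq_iff]
      constructor
      · push_cast; linarith
      · push_cast; linarith
    simp only [zz, if_neg hx0, if_pos hx1, hfl]
    refine Prod.ext ?_ ?_
    · show ‖q.2 - p.2‖/(2*(N:ℝ)) * (1 - |2*(N:ℝ)*x - 2*((j:ℤ):ℝ) - 1|) = _
      rw [show ((j:ℤ):ℝ) = (j:ℝ) by push_cast; ring,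
        abs_of_nonneg (by linarith : (0:ℝ) ≤ 2*(N:ℝ)*x - 2*(j:ℝ) - 1)]
      show _ = (2*(j:ℝ)+2) * (‖q.2 - p.2‖ / (2*(N:ℝ))) + x * (-‖q.2 - p.2‖)
      field_simp
      ring
    · rfl

lemma zz_fst_grid (p q : Mink n) {N : ℕ} (hN : 1 ≤ N) {m : ℕ} (hm : m ≤ 2*N) :
    (zz p q N ((m:ℝ)/(2*(N:ℝ)))).1 =
      if Even m then 0 else ‖q.2 - p.2‖ / (2*(N:ℝ)) := by
  have hNr : (1:ℝ) ≤ (N:ℝ) := by exact_mod_cast hN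
  have h2N : (0:ℝ) < 2*(N:ℝ) := by linarith
  rcases Nat.eq_zero_or_pos m with hm0 | hm1
  · subst hm0
    norm_num [zz]
  · have hx0 : ¬ ((m:ℝ)/(2*(N:ℝ)) ≤ 0) := by
      push_neg
      apply div_pos (by exact_mod_cast hm1) h2N
    have hx1 : (m:ℝ)/(2*(N:ℝ)) ≤ 1 := by
      rw [div_le_iff₀ h2N]
      have : (m:ℝ) ≤ 2*(N:ℝ) := by exact_mod_cast hm
      linarith
    have hkey : 2*(N:ℝ)*((m:ℝ)/(2*(N:ℝ))) = (m:ℝ) := by field_simp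
    have hy : (N:ℝ)*((m:ℝ)/(2*(N:ℝ))) = (m:ℝ)/2 := by field_simp
    rcases Nat.even_or_odd m with hEv | hOd
    · obtain ⟨j, hj⟩ := hEv
      have hmr : (m:ℝ) = (j:ℝ) + (j:ℝ) := by exact_mod_cast hj
      have hfl : ⌊(N:ℝ)*((m:ℝ)/(2*(N:ℝ)))⌋ = (j:ℤ) := by
        rw [Int.floor_eq_iff, hy]
        constructor
        · push_cast; linarith
        · push_cast; linarith
      have hEv : Even m := ⟨j, hj⟩
      rw [if_pos hEv]
      simp only [zz, if_neg hx0, if_pos hx1, hfl]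
      show ‖q.2 - p.2‖/(2*(N:ℝ)) * (1 - |2*(N:ℝ)*((m:ℝ)/(2*(N:ℝ))) - 2*((j:ℤ):ℝ) - 1|) = 0
      rw [hkey, show ((j:ℤ):ℝ) = (j:ℝ) by push_cast; ring]
      rw [show (m:ℝ) - 2*(j:ℝ) - 1 = -1 by linarith, abs_neg, abs_one]
      ring
    · obtain ⟨j, hj⟩ := hOd
      have hmr : (m:ℝ) = 2*(j:ℝ) + 1 := by exact_mod_cast hj
      have hfl : ⌊(N:ℝ)*((m:ℝ)/(2*(N:ℝ)))⌋ = (j:ℤ) := by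
        rw [Int.floor_eq_iff, hy]
        constructor
        · push_cast; linarith
        · push_cast; linarith
      have hodd : ¬ Even m := by
        rw [hj]; simp [parity_simps]
      rw [if_neg hodd]
      simp only [zz, if_neg hx0, if_pos hx1, hfl]
      show ‖q.2 - p.2‖/(2*(N:ℝ)) * (1 - |2*(N:ℝ)*((m:ℝ)/(2*(N:ℝ))) - 2*((j:ℤ):ℝ) - 1|) = _
      rw [hkey, show ((j:ℤ):ℝ) = (j:ℝ) by push_cast; ring]
      rw [show (m:ℝ) - 2*(j:ℝ) - 1 = 0 by linarith, abs_zero]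
      ring


lemma zz_pwc (p q : Mink n) (hp : p.1 < 0) (hq : 0 < q.1) {N : ℕ} (hN : 1 ≤ N) :
    ∃ P : PWC (zz p q N) (-1) 2,
      nullLength (fun x => x.1 ^ 3) P
        = q.1 ^ 3 - p.1 ^ 3 + 2*(N:ℝ)*(‖q.2 - p.2‖/(2*(N:ℝ)))^3 := by
  have hNr : (1:ℝ) ≤ (N:ℝ) := by exact_mod_cast hN
  have h2N : (0:ℝ) < 2*(N:ℝ) := by linarith
  have hD0 : (0:ℝ) ≤ ‖q.2 - p.2‖ := norm_nonneg _
  have hε0 : (0:ℝ) ≤ ‖q.2 - p.2‖/(2*(N:ℝ)) := div_nonneg hD0 (le_of_lt h2N)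
  -- break point values
  have hz1 : zs N 1 = 0 := by
    rw [zs_mid N le_rfl (by omega)]; norm_num
  have hztop : zs N (2*N+1) = 1 := by
    rw [zs_mid N (by omega) le_rfl]
    push_cast
    field_simp
    ring
  refine ⟨⟨2*N+2, zs N, ?_, zs_zero N, zs_last N, ?_⟩, ?_⟩
  · -- mono
    intro i hi
    rcases Nat.eq_zero_or_pos i with rfl | hi1
    · rw [zs_zero, hz1]; norm_num
    · rcases eq_or_lt_of_le (show i ≤ 2*N+1 by omega) with rfl | hilt
      · rw [hztop, zs_last]; norm_num
      · rw [zs_mid N hi1 (by omega), zs_mid N (by omega) (by omega)]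
        rw [div_lt_div_iff₀ h2N h2N]
        push_cast
        nlinarith
  · -- causal
    intro i hi
    rcases Nat.eq_zero_or_pos i with rfl | hi1
    · left
      rw [zs_zero, hz1]
      refine futureCausalOn_of_affine (by norm_num) (zz_left p q N) (by linarith) ?_
      simp
      nlinarith
    · rcases eq_or_lt_of_le (show i ≤ 2*N+1 by omega) with rfl | hilt
      · left
        rw [hztop, zs_last]
        refine futureCausalOn_of_affine (by norm_num) (zz_right p q N hN) (le_of_lt hq) ?_
        simp
        positivity
      · -- middle pieces
        have him : i - 1 < 2*N := by omega
        have e2 : zs N (i+1) = ((i:ℝ))/(2*(N:ℝ)) := by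
          rw [zs_mid N (by omega) (by omega)]; push_cast; ring_nf
        rcases Nat.even_or_odd (i-1) with ⟨j, hj⟩ | ⟨j, hj⟩
        · -- future piece, i = 2j+1
          have hjN : j < N := by omega
          have e1' : zs N i = (2*(j:ℝ))/(2*(N:ℝ)) := by
            rw [zs_mid N hi1 (by omega)]
            congr 1
            have : i = 2*j+1 := by omega
            subst this; push_cast; ring
          have e2' : zs N (i+1) = (2*(j:ℝ)+1)/(2*(N:ℝ)) := by
            rw [e2]
            congr 1
            have : i = 2*j+1 := by omega
            subst this; push_cast; ring
          left
          rw [e1', e2']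
          refine futureCausalOn_of_affine ?_ (zz_even p q hN hjN) hD0 le_rfl
          rw [div_lt_div_iff₀ h2N h2N]
          nlinarith
        · -- past piece, i = 2j+2
          have hjN : j < N := by omega
          have e1' : zs N i = (2*(j:ℝ)+1)/(2*(N:ℝ)) := by
            rw [zs_mid N hi1 (by omega)]
            congr 1
            have : i = 2*j+2 := by omega
            subst this; push_cast; ring
          have e2' : zs N (i+1) = (2*(j:ℝ)+2)/(2*(N:ℝ)) := by
            rw [e2]
            congr 1
            have : i = 2*j+2 := by omega
            subst this; push_cast; ring
          right
          rw [e1', e2']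
          refine pastCausalOn_of_affine ?_ (zz_odd p q hN hjN) (by linarith) ?_
          · rw [div_lt_div_iff₀ h2N h2N]
            nlinarith
          · rw [neg_pow]
            norm_num
  · -- null length computation
    have hg : ∀ i, 1 ≤ i → i ≤ 2*N+1 →
        (zz p q N (zs N i)).1 = if Even (i-1) then 0 else ‖q.2 - p.2‖/(2*(N:ℝ)) := by
      intro i h1 h2
      rw [zs_mid N h1 h2, show ((i:ℝ)-1) = (((i-1:ℕ)):ℝ) by
        rw [Nat.cast_sub h1, Nat.cast_one]]
      exact zz_fst_grid p q hN (by omega)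
    have hg0 : (zz p q N (zs N 0)).1 = p.1 := by rw [zs_zero, zz_start]
    have hgl : (zz p q N (zs N (2*N+1+1))).1 = q.1 := by
      have e : zs N (2*N+1+1) = 2 := zs_last N
      rw [e, zz_end]
    have hmid : ∀ i ∈ Finset.range (2*N),
        |(zz p q N (zs N (i+1+1))).1^3 - (zz p q N (zs N (i+1))).1^3|
          = (‖q.2 - p.2‖/(2*(N:ℝ)))^3 := by
      intro i hi
      have hi' := Finset.mem_range.mp hi
      rw [hg (i+1) (by omega) (by omega), hg (i+1+1) (by omega) (by omega)]
      simp only [Nat.add_sub_cancel]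
      rcases Nat.even_or_odd i with he | ho
      · rw [if_pos he, if_neg (by simpa [Nat.even_add_one] using he)]
        rw [zero_pow (by norm_num : 3 ≠ 0), sub_zero, abs_of_nonneg (by positivity)]
      · have hne : ¬ Even i := by
          rcases ho with ⟨k, hk⟩
          rintro ⟨r, hr⟩
          omega
        rw [if_pos (Nat.even_add_one.mpr hne), if_neg hne]
        rw [zero_pow (by norm_num : 3 ≠ 0), zero_sub, abs_neg, abs_of_nonneg (by positivity)]
    have h0 : |(zz p q N (zs N (0+1))).1^3 - (zz p q N (zs N 0)).1^3| = -(p.1^3) := by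
      rw [hg0, hg 1 le_rfl (by omega)]
      have hp3 : p.1^3 < 0 := Odd.pow_neg ⟨1, by norm_num⟩ hp
      rw [if_pos (by norm_num), zero_pow (by norm_num : 3 ≠ 0), zero_sub, abs_neg,
        abs_of_nonpos hp3.le]
    have htop : |(zz p q N (zs N (2*N+1+1))).1^3 - (zz p q N (zs N (2*N+1))).1^3|
        = q.1^3 := by
      rw [hgl, hg (2*N+1) (by omega) le_rfl]
      rw [if_pos (by simp [Nat.add_sub_cancel] : Even (2*N+1-1)),
        zero_pow (by norm_num : 3 ≠ 0), sub_zero, abs_of_pos (pow_pos hq 3)]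
    simp only [nullLength]
    rw [show 2*N+2 = (2*N+1)+1 by omega, Finset.sum_range_succ, Finset.sum_range_succ']
    rw [Finset.sum_congr rfl hmid, Finset.sum_const, Finset.card_range, h0, htop,
      nsmul_eq_mul]
    push_cast
    ring

/-- On Minkowski space with `τ = t³`, any points `p, q` with
`t_p < 0 < t_q` satisfy `d̂_τ(p,q) = τ(q) − τ(p)`, whether or not they are
causally related; hence `d̂_τ` fails to encode the causal structure. -/
theorem nullDist_tcubed_fails_causality (n : ℕ) (p q : Mink n)
    (hp : p.1 < 0) (hq : 0 < q.1) :
    nullDist (fun x => x.1 ^ 3) p q = q.1 ^ 3 - p.1 ^ 3 := by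
  classical
  set S : Set ℝ := {r | ∃ (γ : ℝ → Mink n) (a b : ℝ) (P : PWC γ a b),
    γ a = p ∧ γ b = q ∧ r = nullLength (fun x => x.1 ^ 3) P} with hS
  have hlb : ∀ r ∈ S, q.1 ^ 3 - p.1 ^ 3 ≤ r := by
    rintro r ⟨γ, a, b, P, ha, hb, rfl⟩
    have h := nullLength_lower (fun x : Mink n => x.1 ^ 3) P
    rw [ha, hb] at h
    exact h
  have hmemN : ∀ N : ℕ, 1 ≤ N →
      q.1 ^ 3 - p.1 ^ 3 + 2*(N:ℝ)*(‖q.2 - p.2‖/(2*(N:ℝ)))^3 ∈ S := by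
    intro N hN
    obtain ⟨P, hP⟩ := zz_pwc p q hp hq hN
    exact ⟨zz p q N, -1, 2, P, zz_start p q N, zz_end p q N, hP.symm⟩
  have hne : S.Nonempty := ⟨_, hmemN 1 le_rfl⟩
  have hbdd : BddBelow S := ⟨q.1 ^ 3 - p.1 ^ 3, hlb⟩
  refine le_antisymm ?_ (le_csInf hne hlb)
  apply le_of_forall_pos_le_add
  intro δ hδ
  obtain ⟨N, hNgt⟩ := exists_nat_gt (max 1 (‖q.2 - p.2‖^3 / (4*δ)))
  have hN1 : 1 ≤ N := by
    exact_mod_cast ((le_max_left 1 (‖q.2 - p.2‖^3/(4*δ))).trans hNgt.le)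
  have hNr : (1:ℝ) ≤ (N:ℝ) := by exact_mod_cast hN1
  have key : 2*(N:ℝ)*(‖q.2 - p.2‖/(2*(N:ℝ)))^3 < δ := by
    have h1 : ‖q.2 - p.2‖^3/(4*δ) < (N:ℝ) :=
      lt_of_le_of_lt (le_max_right _ _) hNgt
    have h2 : ‖q.2 - p.2‖^3 < (N:ℝ)*(4*δ) := by
      rw [div_lt_iff₀ (by positivity)] at h1
      linarith
    have h3 : 2*(N:ℝ)*(‖q.2 - p.2‖/(2*(N:ℝ)))^3 = ‖q.2 - p.2‖^3/(4*(N:ℝ)^2) := by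
      field_simp
      ring
    rw [h3, div_lt_iff₀ (by positivity)]
    have h4 : (N:ℝ) ≤ (N:ℝ)^2 := by nlinarith
    nlinarith [mul_le_mul_of_nonneg_left h4 hδ.le]
  have hle := csInf_le hbdd (hmemN N hN1)
  calc nullDist (fun x : Mink n => x.1 ^ 3) p q
      ≤ q.1 ^ 3 - p.1 ^ 3 + 2*(N:ℝ)*(‖q.2 - p.2‖/(2*(N:ℝ)))^3 := hle
    _ ≤ q.1 ^ 3 - p.1 ^ 3 + δ := by linarith

end NullDistMink
end
end
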